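/- arXiv:1801.09090 — 2 statements merged into one kernel-verified Lean document; each statement's English description precedes it below -/
import Mathlib

section
/- Let λ be a partition with Frobenius coordinates (a_1,…,a_r | b_1,…,b_r). Then for every integer k ≥ 0 and every integer N ≥ l(λ), Σ_{j=1}^{r} ( (a_j + 1/2)^k − (−b_j − 1/2)^k ) = Σ_{i=1}^{N} ( (λ_i − i + 1/2)^k − (−i + 1/2)^k ). -/
/-!
Let `r` be the Frobenius rank and `μ'` the conjugate partition. For `i ≥ r` one has `μ i ≤ i`,
and the numbers `i - μ i` (`r ≤ i < N`) together with the numbers `μ' j - j - 1` (`j < r`) are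
exactly `0, 1, …, N - 1`, each taken once: the first family is strictly increasing, the second
strictly decreasing, and they never meet because `j < μ i` holds exactly when `i < μ' j`.
Summing `(-x - 1/2)^k` over this decomposition of `{0, …, N - 1}` turns the right-hand side of
the identity into the left-hand side.
-/

/-- The Frobenius rank of a partition `μ` (0-indexed): the number of indices `i`
with `i < μ i`. -/
noncomputable def frobeniusRank (μ : ℕ → ℕ) : ℕ := Nat.card {i : ℕ | i < μ i}

/-- The `j`-th part (0-indexed) of the conjugate partition of `μ`:
`μ' j = #{i : μ i > j}`. -/
noncomputable def conjugatePart (μ : ℕ → ℕ) (j : ℕ) : ℕ := Nat.card {i : ℕ | j < μ i}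

open Finset

theorem Nat.lt_card_setOf_iff {p : ℕ → Prop} (hp : Antitone p) (hfin : {i | p i}.Finite)
    (i : ℕ) : i < Nat.card {i | p i} ↔ p i := by
  rw [Nat.card_coe_set_eq]
  rcases isLowerSet_setOfPred.2 hp |>.eq_univ_or_Iio with h | ⟨a, h⟩
  · exact absurd (h ▸ hfin) Set.infinite_univ
  · rw [h, Set.ncard_Iio_nat, ← Set.mem_Iio, ← h]
    rfl

theorem Antitone.strictMonoOn_id_sub {f : ℕ → ℕ} (hf : Antitone f) :
    StrictMonoOn (fun i => i - f i) {i | f i ≤ i} := by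
  intro i hi i' _ hii'
  have := hf hii'.le
  change f i ≤ i at hi
  change i - f i < i' - f i'
  omega

theorem Antitone.strictAntiOn_sub_id_sub_one {g : ℕ → ℕ} (hg : Antitone g) :
    StrictAntiOn (fun j => g j - j - 1) {j | j < g j} := by
  intro j _ j' hj' hjj'
  have := hg hjj'.le
  change j' < g j' at hj'
  change g j' - j' - 1 < g j - j - 1
  omega

section Frobenius

variable {μ : ℕ → ℕ} {l : ℕ}

theorem lt_conjugatePart_iff (hμ : Antitone μ) (hl : ∀ i, l ≤ i → μ i = 0) (i j : ℕ) :
    i < conjugatePart μ j ↔ j < μ i := by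
  refine Nat.lt_card_setOf_iff (fun a b hab h => h.trans_le (hμ hab)) ?_ i
  refine (Set.finite_Iio l).subset fun i hi => ?_
  by_contra h
  simp_all [hl i (not_lt.1 h)]

theorem lt_frobeniusRank_iff (hμ : Antitone μ) (hl : ∀ i, l ≤ i → μ i = 0) (i : ℕ) :
    i < frobeniusRank μ ↔ i < μ i := by
  refine Nat.lt_card_setOf_iff (fun a b hab h => (hab.trans_lt h).trans_le (hμ hab)) ?_ i
  refine (Set.finite_Iio l).subset fun i hi => ?_
  by_contra h
  simp_all [hl i (not_lt.1 h)]

theorem frobeniusRank_le (hμ : Antitone μ) (hl : ∀ i, l ≤ i → μ i = 0) :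
    frobeniusRank μ ≤ l :=
  not_lt.1 fun h => by simpa [hl l le_rfl] using (lt_frobeniusRank_iff hμ hl l).1 h

theorem conjugatePart_le (hμ : Antitone μ) (hl : ∀ i, l ≤ i → μ i = 0) (j : ℕ) :
    conjugatePart μ j ≤ l :=
  not_lt.1 fun h => by simpa [hl l le_rfl] using (lt_conjugatePart_iff hμ hl l j).1 h

theorem antitone_conjugatePart (hμ : Antitone μ) (hl : ∀ i, l ≤ i → μ i = 0) :
    Antitone (conjugatePart μ) := fun j j' hjj' =>
  le_of_forall_lt fun i hi => (lt_conjugatePart_iff hμ hl i j).2 <|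
    hjj'.trans_lt ((lt_conjugatePart_iff hμ hl i j').1 hi)

theorem apply_le_of_frobeniusRank_le (hμ : Antitone μ) (hl : ∀ i, l ≤ i → μ i = 0) {i : ℕ}
    (hi : frobeniusRank μ ≤ i) : μ i ≤ i :=
  not_lt.1 fun h => hi.not_gt ((lt_frobeniusRank_iff hμ hl i).2 h)

theorem lt_conjugatePart_self (hμ : Antitone μ) (hl : ∀ i, l ≤ i → μ i = 0) {j : ℕ}
    (hj : j < frobeniusRank μ) : j < conjugatePart μ j :=
  (lt_conjugatePart_iff hμ hl j j).2 ((lt_frobeniusRank_iff hμ hl j).1 hj)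

theorem injOn_sub_apply_Ico (hμ : Antitone μ) (hl : ∀ i, l ≤ i → μ i = 0) (N : ℕ) :
    Set.InjOn (fun i => i - μ i) (Ico (frobeniusRank μ) N) :=
  hμ.strictMonoOn_id_sub.injOn.mono fun _ hi =>
    apply_le_of_frobeniusRank_le hμ hl (mem_Ico.1 hi).1

theorem injOn_conjugatePart_sub_range (hμ : Antitone μ) (hl : ∀ i, l ≤ i → μ i = 0) :
    Set.InjOn (fun j => conjugatePart μ j - j - 1) (range (frobeniusRank μ)) :=
  (antitone_conjugatePart hμ hl).strictAntiOn_sub_id_sub_one.injOn.mono fun _ hj =>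
    lt_conjugatePart_self hμ hl (mem_range.1 hj)

theorem disjoint_image_sub_apply_image_conjugatePart_sub (hμ : Antitone μ)
    (hl : ∀ i, l ≤ i → μ i = 0) (N : ℕ) :
    Disjoint ((Ico (frobeniusRank μ) N).image fun i => i - μ i)
      ((range (frobeniusRank μ)).image fun j => conjugatePart μ j - j - 1) := by
  simp only [disjoint_left, mem_image, mem_Ico, mem_range, not_exists, not_and]
  rintro _ ⟨i, ⟨hri, -⟩, rfl⟩ j hjr
  have hμi := apply_le_of_frobeniusRank_le hμ hl hri
  have hj := lt_conjugatePart_self hμ hl hjr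
  by_cases hji : j < μ i
  · have := (lt_conjugatePart_iff hμ hl i j).2 hji
    omega
  · have := mt (lt_conjugatePart_iff hμ hl i j).1 hji
    omega

theorem image_sub_apply_union_image_conjugatePart_sub (hμ : Antitone μ)
    (hl : ∀ i, l ≤ i → μ i = 0) {N : ℕ} (hN : l ≤ N) :
    ((Ico (frobeniusRank μ) N).image fun i => i - μ i) ∪
      ((range (frobeniusRank μ)).image fun j => conjugatePart μ j - j - 1) = range N := by
  refine eq_of_subset_of_card_le ?_ ?_
  · intro x
    simp only [mem_union, mem_image, mem_Ico, mem_range]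
    rintro (⟨i, ⟨-, hiN⟩, rfl⟩ | ⟨j, hjr, rfl⟩)
    · omega
    · have := conjugatePart_le hμ hl j
      have := frobeniusRank_le hμ hl
      omega
  · rw [card_union_of_disjoint (disjoint_image_sub_apply_image_conjugatePart_sub hμ hl N),
      card_image_of_injOn (injOn_sub_apply_Ico hμ hl N),
      card_image_of_injOn (injOn_conjugatePart_sub_range hμ hl), Nat.card_Ico, card_range,
      card_range]
    have := frobeniusRank_le hμ hl
    omega

theorem sum_range_eq_sum_Ico_sub_apply_add_sum_conjugatePart_sub {M : Type*} [AddCommMonoid M]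
    (hμ : Antitone μ) (hl : ∀ i, l ≤ i → μ i = 0) {N : ℕ} (hN : l ≤ N) (f : ℕ → M) :
    ∑ x ∈ range N, f x = ∑ i ∈ Ico (frobeniusRank μ) N, f (i - μ i) +
      ∑ j ∈ range (frobeniusRank μ), f (conjugatePart μ j - j - 1) := by
  rw [← image_sub_apply_union_image_conjugatePart_sub hμ hl hN,
    sum_union (disjoint_image_sub_apply_image_conjugatePart_sub hμ hl N),
    sum_image (injOn_sub_apply_Ico hμ hl N), sum_image (injOn_conjugatePart_sub_range hμ hl)]

end Frobenius

/-- Indices are 0-based: `a_j + 1/2 = μ j - j - 1/2`, `-b_j - 1/2 = -(μ' j - j - 1/2)`,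
`λ_i - i + 1/2 = μ i - i - 1/2` and `-i + 1/2 = -i - 1/2`. -/
theorem stmt_3 (μ : ℕ → ℕ) (hμ : Antitone μ) (l : ℕ)
    (hl : ∀ i, μ i ≠ 0 ↔ i < l) (k : ℕ) (N : ℕ) (hN : l ≤ N) :
    ∑ j ∈ Finset.range (frobeniusRank μ),
        (((μ j : ℚ) - (j : ℚ) - 1 / 2) ^ k -
          (-((conjugatePart μ j : ℚ) - (j : ℚ) - 1 / 2)) ^ k) =
      ∑ i ∈ Finset.range N,
        (((μ i : ℚ) - (i : ℚ) - 1 / 2) ^ k - (-(i : ℚ) - 1 / 2) ^ k) := by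
  have hl' : ∀ i, l ≤ i → μ i = 0 := fun i hi => not_ne_iff.1 fun h => ((hl i).1 h).not_ge hi
  have hrN : frobeniusRank μ ≤ N := (frobeniusRank_le hμ hl').trans hN
  have hsplit := sum_range_eq_sum_Ico_sub_apply_add_sum_conjugatePart_sub hμ hl' hN
    fun x => (-(x : ℚ) - 1 / 2) ^ k
  have hrow : ∀ i ∈ Ico (frobeniusRank μ) N,
      (-((i - μ i : ℕ) : ℚ) - 1 / 2) ^ k = ((μ i : ℚ) - i - 1 / 2) ^ k := fun i hi => by
    rw [Nat.cast_sub (apply_le_of_frobeniusRank_le hμ hl' (mem_Ico.1 hi).1)]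
    ring
  have hcol : ∀ j ∈ range (frobeniusRank μ),
      (-((conjugatePart μ j - j - 1 : ℕ) : ℚ) - 1 / 2) ^ k =
        (-((conjugatePart μ j : ℚ) - j - 1 / 2)) ^ k := fun j hj => by
    rw [Nat.sub_sub, Nat.cast_sub (lt_conjugatePart_self hμ hl' (mem_range.1 hj))]
    push_cast
    ring
  rw [sum_sub_distrib, sum_sub_distrib, hsplit, sum_congr rfl hrow, sum_congr rfl hcol,
    ← sum_range_add_sum_Ico _ hrN]
  ring
end

section
/- (Bloch–Okounkov one-point function) Let q and t be real numbers with 0 < q < 1 and 1 < t < 1/q. Then all series below converge absolutely and ( ∏_{n≥1} (1 − q^n) ) · Σ_{λ∈𝒫} q^{|λ|} Σ_{i=1}^∞ t^{λ_i − i + 1/2} = 1/θ(t), where θ(t) = ( ∏_{n≥1} (1 − q^n) )^{−2} · ( t^{1/2} − t^{−1/2} ) · ∏_{n≥1} (1 − q^n t)(1 − q^n t^{−1}). -/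
/-- A partition: a nonincreasing sequence of nonnegative integers (0-indexed)
with only finitely many nonzero terms. -/
structure IntPartition where
  parts : ℕ → ℕ
  antitone' : Antitone parts
  finite_support' : ∃ N, ∀ i, N ≤ i → parts i = 0

/-- The weight `|λ| = Σ_i λ_i` of a partition. -/
noncomputable def IntPartition.wt (lam : IntPartition) : ℕ := ∑' i : ℕ, lam.parts i

/-!
Fix `i`. Cutting a partition `λ` into the rectangle `(i + 1) × λ_i`, the excess of its first `i`
parts over `λ_i` (a partition with at most `i` parts) and its tail `λ_{i+1}, λ_{i+2}, …` (a
partition with parts at most `λ_i`) gives `Σ_λ q^{|λ|} u^{λ_i} = (qu; q)_i / ((q; q)_i (qu; q)_∞)`.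
With `u = t` and the weight `t^{-i-1/2}`, the sum over `i` becomes the `q`-binomial series
`Σ_i (qt; q)_i / (q; q)_i · t^{-i}`, which the `q`-binomial theorem evaluates to
`(q; q)_∞ / (t⁻¹; q)_∞`. All terms are nonnegative, so the two summations may be interchanged.
-/

open Filter Finset Topology

section QPochhammer

variable {R : Type*} [CommRing R]

-- `qPochhammer a q n` is `(a; q)_n`; the infinite product `(a; q)_∞` is written out as
-- `∏' j, (1 - a * q ^ j)`.
def qPochhammer (a q : R) (n : ℕ) : R := ∏ j ∈ range n, (1 - a * q ^ j)

@[simp] lemma qPochhammer_zero (a q : R) : qPochhammer a q 0 = 1 := prod_range_zero _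

lemma qPochhammer_succ (a q : R) (n : ℕ) :
    qPochhammer a q (n + 1) = qPochhammer a q n * (1 - a * q ^ n) := prod_range_succ _ _

@[simp] lemma qPochhammer_zero_left (q : R) (n : ℕ) : qPochhammer 0 q n = 1 := by
  simp [qPochhammer]

end QPochhammer

section InfiniteProduct

variable {𝕜 : Type*} [NormedField 𝕜] {a q : 𝕜}

lemma mul_pow_ne_one (ha : ‖a‖ < 1) (hq : ‖q‖ ≤ 1) (j : ℕ) : a * q ^ j ≠ 1 := by
  intro h
  have : ‖a * q ^ j‖ < 1 := by
    rw [norm_mul, norm_pow]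
    exact (mul_le_of_le_one_right (norm_nonneg a) (pow_le_one₀ (norm_nonneg q) hq)).trans_lt ha
  simp [h] at this

lemma qPochhammer_ne_zero (ha : ∀ j, a * q ^ j ≠ 1) (n : ℕ) : qPochhammer a q n ≠ 0 :=
  prod_ne_zero_iff.2 fun j _ => sub_ne_zero.2 (ha j).symm

lemma summable_norm_mul_pow (a : 𝕜) (hq : ‖q‖ < 1) : Summable fun j => ‖a * q ^ j‖ := by
  simpa [norm_mul, norm_pow] using
    (summable_geometric_of_lt_one (norm_nonneg q) hq).mul_left ‖a‖

variable [CompleteSpace 𝕜]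

lemma multipliable_one_sub_mul_pow (a : 𝕜) (hq : ‖q‖ < 1) :
    Multipliable fun j => 1 - a * q ^ j := by
  simpa [sub_eq_add_neg] using
    multipliable_one_add_of_summable (f := fun j => -(a * q ^ j))
      (by simpa using summable_norm_mul_pow a hq)

lemma tprod_one_sub_mul_pow_ne_zero (hq : ‖q‖ < 1) (ha : ∀ j, a * q ^ j ≠ 1) :
    ∏' j, (1 - a * q ^ j) ≠ 0 := by
  simpa [sub_eq_add_neg] using
    tprod_one_add_ne_zero_of_summable (f := fun j => -(a * q ^ j))
      (fun j => by simpa [← sub_eq_add_neg, sub_eq_zero] using (ha j).symm)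
      (by simpa using summable_norm_mul_pow a hq)

lemma tendsto_qPochhammer (a : 𝕜) (hq : ‖q‖ < 1) :
    Tendsto (qPochhammer a q) atTop (𝓝 (∏' j, (1 - a * q ^ j))) :=
  (multipliable_one_sub_mul_pow a hq).hasProd.tendsto_prod_nat

lemma tprod_one_sub_mul_pow_eq (a : 𝕜) (hq : ‖q‖ < 1) (k : ℕ) :
    ∏' j, (1 - a * q ^ j) = qPochhammer a q k * ∏' j, (1 - a * q ^ k * q ^ j) := by
  have hshift (j : ℕ) : a * q ^ k * q ^ j = a * q ^ (j + k) := by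
    rw [mul_assoc, ← pow_add, add_comm]
  have h : Multipliable fun j => 1 - a * q ^ (j + k) := by
    simpa only [hshift] using multipliable_one_sub_mul_pow (a * q ^ k) hq
  rw [← Multipliable.prod_mul_tprod_nat_mul' (f := fun j => 1 - a * q ^ j) h, qPochhammer]
  simp only [hshift]

end InfiniteProduct

section QBinomial

variable {𝕜 : Type*} [NormedField 𝕜] {a q z : 𝕜}

noncomputable def qBinomialSeries (a q z : 𝕜) : 𝕜 :=
  ∑' k, qPochhammer a q k / qPochhammer q q k * z ^ k

lemma qPochhammer_div_succ (a q : 𝕜) (k : ℕ) :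
    qPochhammer a q (k + 1) / qPochhammer q q (k + 1) =
      qPochhammer a q k / qPochhammer q q k * ((1 - a * q ^ k) / (1 - q * q ^ k)) := by
  rw [qPochhammer_succ, qPochhammer_succ, mul_div_mul_comm]

lemma norm_mul_pow_lt_one (hq : ‖q‖ ≤ 1) (hz : ‖z‖ < 1) (n : ℕ) : ‖q ^ n * z‖ < 1 := by
  rw [norm_mul, norm_pow]
  exact (mul_le_of_le_one_left (norm_nonneg z) (pow_le_one₀ (norm_nonneg q) hq)).trans_lt hz

lemma summable_norm_qBinomial (a : 𝕜) (hq : ‖q‖ < 1) (hz : ‖z‖ < 1) :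
    Summable fun k => ‖qPochhammer a q k / qPochhammer q q k * z ^ k‖ := by
  obtain ⟨r, hzr, hr⟩ := exists_between hz
  refine summable_of_ratio_norm_eventually_le hr ?_
  have hpow := tendsto_pow_atTop_nhds_zero_of_norm_lt_one hq
  have hratio : Tendsto (fun k => ‖(1 - a * q ^ k) / (1 - q * q ^ k) * z‖) atTop (𝓝 ‖z‖) := by
    have h1 : Tendsto (fun _ : ℕ => (1 : 𝕜)) atTop (𝓝 1) := tendsto_const_nhds
    simpa using (((h1.sub (hpow.const_mul a)).div (h1.sub (hpow.const_mul q)) (by simp)).mul_const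
      z).norm
  filter_upwards [hratio.eventually (gt_mem_nhds hzr)] with k hk
  rw [norm_norm, norm_norm, qPochhammer_div_succ, pow_succ,
    show ∀ c d : 𝕜, c * d * (z ^ k * z) = c * z ^ k * (d * z) by intros; ring, norm_mul (_ * _),
    mul_comm r]
  exact mul_le_mul_of_nonneg_left hk.le (norm_nonneg _)

variable [CompleteSpace 𝕜]

lemma hasSum_qBinomialSeries (a : 𝕜) (hq : ‖q‖ < 1) (hz : ‖z‖ < 1) :
    HasSum (fun k => qPochhammer a q k / qPochhammer q q k * z ^ k) (qBinomialSeries a q z) :=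
  (summable_norm_qBinomial a hq hz).of_norm.hasSum

lemma one_sub_mul_qBinomialSeries (hq : ‖q‖ < 1) (hz : ‖z‖ < 1) :
    (1 - z) * qBinomialSeries a q z = (1 - a * z) * qBinomialSeries a q (q * z) := by
  set c : ℕ → 𝕜 := fun k => qPochhammer a q k / qPochhammer q q k
  have hc (k : ℕ) : c (k + 1) * (1 - q ^ (k + 1)) = c k * (1 - a * q ^ k) := by
    have hne : 1 - q * q ^ k ≠ 0 := sub_ne_zero.2 (mul_pow_ne_one hq hq.le k).symm
    simp only [c]
    rw [qPochhammer_div_succ, pow_succ', mul_assoc, div_mul_cancel₀ _ hne]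
  have hS := hasSum_qBinomialSeries a hq hz
  have hT := hasSum_qBinomialSeries a hq (z := q * z)
    (by simpa using norm_mul_pow_lt_one hq.le hz 1)
  set S := qBinomialSeries a q z
  set T := qBinomialSeries a q (q * z)
  have hdiff : HasSum (fun k => c k * (1 - q ^ k) * z ^ k) (S - T) :=
    (hS.sub hT).congr_fun fun k => by simp only [c, mul_pow]; ring
  have hshift : HasSum (fun k => c k * (1 - a * q ^ k) * z ^ (k + 1)) (S - T) := by
    have := (hasSum_nat_add_iff' (f := fun k => c k * (1 - q ^ k) * z ^ k) 1).mpr hdiff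
    simpa [hc] using this
  have hsplit : HasSum (fun k => c k * (1 - a * q ^ k) * z ^ (k + 1)) (S * z - T * (a * z)) :=
    ((hS.mul_right z).sub (hT.mul_right (a * z))).congr_fun fun k => by
      simp only [c, mul_pow]; ring
  linear_combination hshift.unique hsplit

lemma qBinomialSeries_mul_qPochhammer (hq : ‖q‖ < 1) (hz : ‖z‖ < 1) (n : ℕ) :
    qBinomialSeries a q z * qPochhammer z q n =
      qPochhammer (a * z) q n * qBinomialSeries a q (q ^ n * z) := by
  induction n with
  | zero => simp
  | succ n ih =>
    have hfun := one_sub_mul_qBinomialSeries (a := a) hq (norm_mul_pow_lt_one hq.le hz n)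
    rw [show q * (q ^ n * z) = q ^ (n + 1) * z by ring] at hfun
    rw [qPochhammer_succ, qPochhammer_succ]
    linear_combination (1 - z * q ^ n) * ih + qPochhammer (a * z) q n * hfun

lemma tendsto_qBinomialSeries_pow_mul (hq : ‖q‖ < 1) (hz : ‖z‖ < 1) :
    Tendsto (fun n => qBinomialSeries a q (q ^ n * z)) atTop (𝓝 1) := by
  set c : ℕ → 𝕜 := fun k => qPochhammer a q k / qPochhammer q q k
  have hlim : ∑' k, c k * (0 * z) ^ k = 1 := by
    rw [tsum_eq_single 0 fun k hk => by simp [hk]]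
    simp [c]
  rw [← hlim]
  refine tendsto_tsum_of_dominated_convergence (summable_norm_qBinomial a hq hz)
    (fun k => (((tendsto_pow_atTop_nhds_zero_of_norm_lt_one hq).mul_const z).pow k).const_mul _)
    (Eventually.of_forall fun n k => ?_)
  rw [norm_mul, norm_mul, mul_pow, norm_mul, norm_pow, norm_pow, ← pow_mul]
  gcongr
  exact mul_le_of_le_one_left (by positivity) (pow_le_one₀ (norm_nonneg q) hq.le)

theorem qBinomialSeries_mul_tprod (hq : ‖q‖ < 1) (hz : ‖z‖ < 1) :
    qBinomialSeries a q z * ∏' j, (1 - z * q ^ j) = ∏' j, (1 - a * z * q ^ j) := by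
  refine tendsto_nhds_unique ((tendsto_qPochhammer z hq).const_mul _) ?_
  simpa [qBinomialSeries_mul_qPochhammer hq hz] using
    (tendsto_qPochhammer (a * z) hq).mul (tendsto_qBinomialSeries_pow_mul hq hz)

theorem hasSum_qBinomial (a : 𝕜) (hq : ‖q‖ < 1) (hz : ‖z‖ < 1) :
    HasSum (fun k => qPochhammer a q k / qPochhammer q q k * z ^ k)
      ((∏' j, (1 - a * z * q ^ j)) / ∏' j, (1 - z * q ^ j)) := by
  rw [← qBinomialSeries_mul_tprod hq hz, mul_div_cancel_right₀ _
    (tprod_one_sub_mul_pow_ne_zero hq (mul_pow_ne_one hz hq.le))]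
  exact hasSum_qBinomialSeries a hq hz

theorem hasSum_inv_qPochhammer (hq : ‖q‖ < 1) (hz : ‖z‖ < 1) :
    HasSum (fun k => z ^ k / qPochhammer q q k) (∏' j, (1 - z * q ^ j))⁻¹ := by
  simpa [div_eq_inv_mul] using hasSum_qBinomial 0 hq hz

end QBinomial

lemma hasSum_sigma_of_nonneg {α : Type*} {β : α → Type*} {f : (Σ a, β a) → ℝ} (hf : 0 ≤ f)
    {g : α → ℝ} {s : ℝ} (hg : ∀ a, HasSum (fun b => f ⟨a, b⟩) (g a)) (hs : HasSum g s) :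
    HasSum f s :=
  hs.sigma_of_hasSum hg <| (summable_sigma_of_nonneg hf).2
    ⟨fun a => (hg a).summable, by simpa only [(hg _).tsum_eq] using hs.summable⟩

lemma summable_and_hasSum_tsum_of_nonneg {α β : Type*} {f : α → β → ℝ}
    (hf : ∀ a b, 0 ≤ f a b) {g : β → ℝ} {s : ℝ} (hg : ∀ b, HasSum (fun a => f a b) (g b))
    (hs : HasSum g s) : (∀ a, Summable (f a)) ∧ HasSum (fun a => ∑' b, f a b) s := by
  have hsigma : HasSum (fun p : Σ _ : β, α => f p.2 p.1) s :=
    hasSum_sigma_of_nonneg (fun _ => hf _ _) hg hs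
  have hprod : HasSum (fun p : α × β => f p.1 p.2) s :=
    ((Equiv.sigmaEquivProd β α).trans (Equiv.prodComm β α)).hasSum_iff.1 hsigma
  exact ⟨hprod.summable.prod_factor,
    hprod.prod_fiberwise fun a => (hprod.summable.prod_factor a).hasSum⟩

theorem hasSum_pow_of_equiv_succ {S : ℕ → Type*} [Unique (S 0)] (w : ∀ k, S k → ℕ)
    (hw : w 0 default = 0) (e : ∀ k, ℕ × S k ≃ S (k + 1))
    (he : ∀ k x, w (k + 1) (e k x) = (k + 1) * x.1 + w k x.2) {q : ℝ} (hq0 : 0 ≤ q)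
    (hq1 : q < 1) (k : ℕ) : HasSum (fun x => q ^ w k x) (qPochhammer q q k)⁻¹ := by
  induction k with
  | zero =>
    simpa [hw] using hasSum_single (f := fun x => q ^ w 0 x) default
      fun x hx => (hx (Subsingleton.elim x default)).elim
  | succ k ih =>
    rw [← (e k).hasSum_iff]
    have hgeom : HasSum (fun c : ℕ => (q ^ (k + 1)) ^ c) (1 - q ^ (k + 1))⁻¹ :=
      hasSum_geometric_of_lt_one (by positivity) (pow_lt_one₀ hq0 hq1 k.succ_ne_zero)
    have hprod : Summable fun x : ℕ × S k => (q ^ (k + 1)) ^ x.1 * q ^ w k x.2 :=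
      Summable.mul_of_nonneg (f := fun c : ℕ => (q ^ (k + 1)) ^ c) (g := fun x => q ^ w k x)
        hgeom.summable ih.summable (fun _ => by positivity) fun _ => by positivity
    have hmul := hgeom.mul ih hprod
    have hval : (qPochhammer q q (k + 1))⁻¹ = (1 - q ^ (k + 1))⁻¹ * (qPochhammer q q k)⁻¹ := by
      rw [qPochhammer_succ, mul_inv, mul_comm, pow_succ']
    rw [hval]
    exact hmul.congr_fun fun x => by rw [Function.comp_apply, he, pow_add, pow_mul]

lemma rpow_natCast_sub_natCast_sub_half {t : ℝ} (ht : 0 < t) (p i : ℕ) :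
    t ^ ((p : ℝ) - i - 1 / 2) = t ^ p * t⁻¹ ^ i / √t := by
  rw [Real.rpow_sub ht, Real.rpow_sub ht, Real.rpow_natCast, Real.rpow_natCast,
    ← Real.sqrt_eq_rpow, inv_pow, div_eq_mul_inv (t ^ p)]

namespace IntPartition

@[ext] lemma ext {lam mu : IntPartition} (h : lam.parts = mu.parts) : lam = mu := by
  cases lam; cases mu; congr

lemma parts_eq_zero_of_le {lam : IntPartition} {k i : ℕ} (h : lam.parts k = 0) (hki : k ≤ i) :
    lam.parts i = 0 :=
  Nat.eq_zero_of_le_zero (h ▸ lam.antitone' hki)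

@[simps]
def empty : IntPartition := ⟨fun _ => 0, antitone_const, 0, fun _ _ => rfl⟩

lemma eq_empty_of_parts_zero {lam : IntPartition} (h : lam.parts 0 = 0) : lam = empty :=
  ext <| funext fun _ => parts_eq_zero_of_le h (Nat.zero_le _)

lemma wt_eq_sum_range (lam : IntPartition) {N : ℕ} (hN : ∀ i, N ≤ i → lam.parts i = 0) :
    lam.wt = ∑ i ∈ range N, lam.parts i :=
  tsum_eq_sum fun i hi => hN i (by simpa using hi)

@[simp] lemma wt_empty : empty.wt = 0 := by
  simp [wt_eq_sum_range empty (N := 0) fun _ _ => rfl]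

@[simps]
def drop (lam : IntPartition) (n : ℕ) : IntPartition where
  parts i := lam.parts (n + i)
  antitone' _ _ h := lam.antitone' (by omega)
  finite_support' := lam.finite_support'.imp fun _ hN _ hi => hN _ (by omega)

@[simps]
def tsub (lam : IntPartition) (c : ℕ) : IntPartition where
  parts i := lam.parts i - c
  antitone' _ _ h := Nat.sub_le_sub_right (lam.antitone' h) c
  finite_support' := lam.finite_support'.imp fun _ hN i hi => by simp [hN i hi]

lemma wt_eq_sum_range_add_wt_drop (lam : IntPartition) (n : ℕ) :
    lam.wt = ∑ i ∈ range n, lam.parts i + (lam.drop n).wt := by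
  obtain ⟨N, hN⟩ := lam.finite_support'
  rw [wt_eq_sum_range lam (N := n + N) fun i hi => hN i (by omega), sum_range_add,
    wt_eq_sum_range (lam.drop n) (N := N) fun i hi => hN _ (by omega)]
  rfl

@[simps]
def glue (k c : ℕ) (mu nu : IntPartition) (hmu : mu.parts k = 0) (hnu : nu.parts 0 ≤ c) :
    IntPartition where
  parts i := if i ≤ k then mu.parts i + c else nu.parts (i - (k + 1))
  antitone' := by
    refine antitone_nat_of_succ_le fun i => ?_
    have := mu.antitone' (Nat.le_add_right i 1)
    rcases lt_trichotomy i k with hik | rfl | hik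
    · simp only [if_pos (show i + 1 ≤ k from hik), if_pos hik.le]
      omega
    · simp [hmu, hnu]
    · simp only [if_neg (show ¬i + 1 ≤ k by omega), if_neg hik.not_ge,
        show i + 1 - (k + 1) = i - (k + 1) + 1 by omega]
      exact nu.antitone' (Nat.le_add_right _ 1)
  finite_support' := by
    obtain ⟨N, hN⟩ := nu.finite_support'
    exact ⟨k + 1 + N, fun i hi => by simp [show ¬i ≤ k by omega, hN _ (by omega : N ≤ i - (k + 1))]⟩

lemma drop_glue (k c : ℕ) (mu nu : IntPartition) (hmu : mu.parts k = 0) (hnu : nu.parts 0 ≤ c) :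
    (glue k c mu nu hmu hnu).drop (k + 1) = nu := by
  ext i; simp [show ¬k + 1 + i ≤ k by omega]

lemma wt_glue (k c : ℕ) (mu nu : IntPartition) (hmu : mu.parts k = 0) (hnu : nu.parts 0 ≤ c) :
    (glue k c mu nu hmu hnu).wt = (k + 1) * c + mu.wt + nu.wt := by
  rw [wt_eq_sum_range_add_wt_drop _ (k + 1), drop_glue,
    wt_eq_sum_range mu (N := k + 1) fun i hi => parts_eq_zero_of_le hmu (by omega)]
  rw [sum_congr rfl fun i hi => by rw [glue_parts, if_pos (by simpa [Nat.lt_succ_iff] using hi)]]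
  simp [sum_add_distrib]
  ring

@[simps]
def prepend (c v : ℕ) (nu : IntPartition) (hnu : nu.parts 0 ≤ v) : IntPartition where
  parts i := if i < c then v else nu.parts (i - c)
  antitone' := by
    refine antitone_nat_of_succ_le fun i => ?_
    by_cases hic : i + 1 < c
    · simp [hic, (by omega : i < c)]
    · by_cases hi : i < c
      · simpa [hic, hi, show i + 1 - c = 0 by omega] using hnu
      · simp only [if_neg hic, if_neg hi, show i + 1 - c = i - c + 1 by omega]
        exact nu.antitone' (Nat.le_add_right _ 1)
  finite_support' := by
    obtain ⟨N, hN⟩ := nu.finite_support'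
    exact ⟨c + N, fun i hi => by simp [show ¬i < c by omega, hN _ (by omega : N ≤ i - c)]⟩

lemma drop_prepend (c v : ℕ) (nu : IntPartition) (hnu : nu.parts 0 ≤ v) :
    (prepend c v nu hnu).drop c = nu := by
  ext i; simp

lemma wt_prepend (c v : ℕ) (nu : IntPartition) (hnu : nu.parts 0 ≤ v) :
    (prepend c v nu hnu).wt = c * v + nu.wt := by
  rw [wt_eq_sum_range_add_wt_drop _ c, drop_prepend,
    sum_congr rfl fun i hi => by rw [prepend_parts, if_pos (by simpa using hi)]]
  simp

abbrev LengthLE (k : ℕ) : Type := {lam : IntPartition // lam.parts k = 0}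

abbrev LargestLE (m : ℕ) : Type := {lam : IntPartition // lam.parts 0 ≤ m}

instance : Unique (LengthLE 0) where
  default := ⟨empty, rfl⟩
  uniq lam := Subtype.ext (eq_empty_of_parts_zero lam.2)

instance : Unique (LargestLE 0) where
  default := ⟨empty, le_rfl⟩
  uniq lam := Subtype.ext (eq_empty_of_parts_zero (Nat.le_zero.1 lam.2))

lemma exists_parts_le (lam : IntPartition) (m : ℕ) : ∃ i, lam.parts i ≤ m :=
  lam.finite_support'.imp fun N hN => (hN N le_rfl).le.trans (Nat.zero_le m)

def firstIndexLE (lam : IntPartition) (m : ℕ) : ℕ := Nat.find (lam.exists_parts_le m)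

lemma parts_firstIndexLE_le (lam : IntPartition) (m : ℕ) : lam.parts (lam.firstIndexLE m) ≤ m :=
  Nat.find_spec (lam.exists_parts_le m)

lemma lt_parts_of_lt_firstIndexLE {lam : IntPartition} {m i : ℕ} (h : i < lam.firstIndexLE m) :
    m < lam.parts i :=
  not_le.1 (Nat.find_min (lam.exists_parts_le m) h)

lemma firstIndexLE_prepend (c m : ℕ) (nu : IntPartition) (hnu : nu.parts 0 ≤ m + 1)
    (hnu' : nu.parts 0 ≤ m) : (prepend c (m + 1) nu hnu).firstIndexLE m = c :=
  (Nat.find_eq_iff _).2 ⟨by simpa using hnu', fun i hi => by simp [hi]⟩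

def lengthLESuccEquiv (k : ℕ) : ℕ × LengthLE k ≃ LengthLE (k + 1) where
  toFun x := ⟨glue k x.1 x.2.1 empty x.2.2 ((empty_parts 0).trans_le (Nat.zero_le _)), by simp⟩
  invFun mu := (mu.1.parts k, ⟨mu.1.tsub (mu.1.parts k), by simp⟩)
  left_inv := by
    rintro ⟨c, mu, hmu⟩
    refine Prod.ext (by simp [hmu]) (Subtype.ext (ext (funext fun i => ?_)))
    by_cases hi : i ≤ k
    · simp [hi, hmu]
    · simp [hi, hmu, parts_eq_zero_of_le hmu (le_of_not_ge hi)]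
  right_inv := by
    rintro ⟨mu, hmu⟩
    refine Subtype.ext (ext (funext fun i => ?_))
    by_cases hi : i ≤ k
    · have := mu.antitone' hi
      simp only [glue_parts, tsub_parts, if_pos hi]
      omega
    · simp [hi, parts_eq_zero_of_le hmu (by omega : k + 1 ≤ i)]

def largestLESuccEquiv (m : ℕ) : ℕ × LargestLE m ≃ LargestLE (m + 1) where
  toFun x := ⟨prepend x.1 (m + 1) x.2.1 (x.2.2.trans m.le_succ), by
    have := x.2.2
    simp only [prepend_parts, Nat.zero_sub]
    split_ifs <;> omega⟩
  invFun nu := (nu.1.firstIndexLE m,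
    ⟨nu.1.drop (nu.1.firstIndexLE m), by simpa using nu.1.parts_firstIndexLE_le m⟩)
  left_inv := by
    rintro ⟨c, nu, hnu⟩
    have hc := firstIndexLE_prepend c m nu (hnu.trans m.le_succ) hnu
    refine Prod.ext hc (Subtype.ext ?_)
    simp only [hc, drop_prepend]
  right_inv := by
    rintro ⟨nu, hnu⟩
    refine Subtype.ext (ext (funext fun i => ?_))
    simp only [prepend_parts, drop_parts]
    split_ifs with hi
    · have := lt_parts_of_lt_firstIndexLE hi
      have := nu.antitone' (Nat.zero_le i)
      omega
    · congr 1
      omega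

def partsEqEquiv (k m : ℕ) :
    {lam : IntPartition // lam.parts k = m} ≃ LengthLE k × LargestLE m where
  toFun lam := (⟨lam.1.tsub m, by simp [lam.2]⟩,
    ⟨lam.1.drop (k + 1), by simpa [← lam.2] using lam.1.antitone' (Nat.le_add_right k 1)⟩)
  invFun p := ⟨glue k m p.1.1 p.2.1 p.1.2 p.2.2, by simp [p.1.2]⟩
  left_inv := by
    rintro ⟨lam, rfl⟩
    refine Subtype.ext (ext (funext fun i => ?_))
    by_cases hi : i ≤ k
    · have := lam.antitone' hi
      simp only [glue_parts, tsub_parts, if_pos hi]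
      omega
    · simp only [glue_parts, drop_parts, if_neg hi]
      congr 1
      omega
  right_inv := by
    rintro ⟨⟨mu, hmu⟩, ⟨nu, hnu⟩⟩
    refine Prod.ext (Subtype.ext (ext (funext fun i => ?_)))
      (Subtype.ext (drop_glue k m mu nu hmu hnu))
    by_cases hi : i ≤ k
    · simp [hi]
    · have := nu.antitone' (Nat.zero_le (i - (k + 1)))
      simp only [glue_parts, tsub_parts, if_neg hi, parts_eq_zero_of_le hmu (le_of_not_ge hi)]
      omega

variable {q t : ℝ}

theorem hasSum_lengthLE (hq0 : 0 ≤ q) (hq1 : q < 1) (k : ℕ) :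
    HasSum (fun mu : LengthLE k => q ^ mu.1.wt) (qPochhammer q q k)⁻¹ :=
  hasSum_pow_of_equiv_succ (S := LengthLE) (fun _ mu => mu.1.wt) wt_empty lengthLESuccEquiv
    (fun k x => by simp only [lengthLESuccEquiv, Equiv.coe_fn_mk, wt_glue, wt_empty, add_zero])
    hq0 hq1 k

theorem hasSum_largestLE (hq0 : 0 ≤ q) (hq1 : q < 1) (m : ℕ) :
    HasSum (fun nu : LargestLE m => q ^ nu.1.wt) (qPochhammer q q m)⁻¹ :=
  hasSum_pow_of_equiv_succ (S := LargestLE) (fun _ nu => nu.1.wt) wt_empty largestLESuccEquiv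
    (fun m x => by simp only [largestLESuccEquiv, Equiv.coe_fn_mk, wt_prepend, mul_comm])
    hq0 hq1 m

theorem hasSum_pow_wt_mul_pow_parts {u : ℝ} (hq0 : 0 ≤ q) (hq1 : q < 1) (hu : 0 ≤ u)
    (hqu : q * u < 1) (k : ℕ) :
    HasSum (fun lam : IntPartition => q ^ lam.wt * u ^ lam.parts k)
      (qPochhammer (q * u) q k / qPochhammer q q k / ∏' j, (1 - q * u * q ^ j)) := by
  have hq : ‖q‖ < 1 := by rwa [Real.norm_of_nonneg hq0]
  have hqu' : ‖q * u‖ < 1 := by rwa [Real.norm_of_nonneg (by positivity)]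
  have hval : qPochhammer (q * u) q k / qPochhammer q q k / ∏' j, (1 - q * u * q ^ j) =
      (qPochhammer q q k)⁻¹ * (∏' j, (1 - q * u * q ^ k * q ^ j))⁻¹ := by
    rw [tprod_one_sub_mul_pow_eq (q * u) hq k]
    field_simp [qPochhammer_ne_zero (mul_pow_ne_one hqu' hq.le) k]
  set ξ := q * u * q ^ k
  have hξ : ‖ξ‖ < 1 := by simpa only [mul_comm (q ^ k)] using norm_mul_pow_lt_one hq.le hqu' k
  rw [hval, ← (Equiv.sigmaFiberEquiv fun lam : IntPartition => lam.parts k).hasSum_iff]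
  refine hasSum_sigma_of_nonneg (fun _ => mul_nonneg (pow_nonneg hq0 _) (pow_nonneg hu _))
    (g := fun m => ξ ^ m * ((qPochhammer q q k)⁻¹ * (qPochhammer q q m)⁻¹)) (fun m => ?_) ?_
  · rw [← (partsEqEquiv k m).symm.hasSum_iff]
    have hprod : Summable fun p : LengthLE k × LargestLE m => q ^ p.1.1.wt * q ^ p.2.1.wt :=
      Summable.mul_of_nonneg (f := fun mu : LengthLE k => q ^ mu.1.wt)
        (g := fun nu : LargestLE m => q ^ nu.1.wt) (hasSum_lengthLE hq0 hq1 k).summable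
        (hasSum_largestLE hq0 hq1 m).summable (fun _ => by positivity) fun _ => by positivity
    refine (((hasSum_lengthLE hq0 hq1 k).mul (hasSum_largestLE hq0 hq1 m) hprod).mul_left
      (ξ ^ m)).congr_fun fun p => ?_
    obtain ⟨⟨mu, hmu⟩, ⟨nu, hnu⟩⟩ := p
    simp only [Function.comp_apply, Equiv.sigmaFiberEquiv_apply, partsEqEquiv, Equiv.coe_fn_symm_mk,
      wt_glue, glue_parts, le_refl, if_true, hmu, zero_add, ξ]
    ring
  · simpa only [div_eq_inv_mul, mul_comm, mul_left_comm, mul_assoc] using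
      (hasSum_inv_qPochhammer hq hξ).mul_left (qPochhammer q q k)⁻¹

theorem hasSum_pow_wt_mul_rpow (hq0 : 0 ≤ q) (hq1 : q < 1) (ht : 0 < t)
    (hqt : q * t < 1) (i : ℕ) :
    HasSum (fun lam : IntPartition => q ^ lam.wt * t ^ ((lam.parts i : ℝ) - i - 1 / 2))
      (qPochhammer (q * t) q i / qPochhammer q q i * t⁻¹ ^ i /
        (√t * ∏' j, (1 - q * t * q ^ j))) := by
  rw [show ∀ a b c : ℝ, a / b * t⁻¹ ^ i / (√t * c) = a / b / c * (t⁻¹ ^ i / √t) by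
    intros; ring]
  exact ((hasSum_pow_wt_mul_pow_parts hq0 hq1 ht.le hqt i).mul_right _).congr_fun
    fun lam => by rw [rpow_natCast_sub_natCast_sub_half ht]; ring

theorem hasSum_pow_wt_mul_tsum_rpow (hq0 : 0 < q) (hq1 : q < 1) (ht1 : 1 < t)
    (hqt : q * t < 1) :
    (∀ lam : IntPartition, Summable fun i : ℕ => t ^ ((lam.parts i : ℝ) - i - 1 / 2)) ∧
    HasSum (fun lam : IntPartition => q ^ lam.wt * ∑' i : ℕ, t ^ ((lam.parts i : ℝ) - i - 1 / 2))
      ((∏' j, (1 - q * q ^ j)) /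
        ((√t - (√t)⁻¹) * (∏' j, (1 - q * t * q ^ j)) * ∏' j, (1 - q * t⁻¹ * q ^ j))) := by
  have ht : 0 < t := one_pos.trans ht1
  have hq : ‖q‖ < 1 := by rwa [Real.norm_of_nonneg hq0.le]
  have hti : ‖t⁻¹‖ < 1 := by
    rw [norm_inv, Real.norm_of_nonneg ht.le]
    exact inv_lt_one_of_one_lt₀ ht1
  have hsum := (hasSum_qBinomial (q * t) hq hti).div_const (√t * ∏' j, (1 - q * t * q ^ j))
  rw [mul_inv_cancel_right₀ ht.ne'] at hsum
  obtain ⟨hrow, hcol⟩ := summable_and_hasSum_tsum_of_nonneg (fun _ _ => by positivity)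
    (hasSum_pow_wt_mul_rpow hq0.le hq1 ht hqt) hsum
  refine ⟨fun lam => (summable_mul_left_iff (pow_ne_zero _ hq0.ne')).1 (hrow lam), ?_⟩
  have hsqrt : √t * (1 - t⁻¹) = √t - (√t)⁻¹ := by
    have := Real.sq_sqrt ht.le
    field_simp
    linarith
  have hti_eq : ∏' j, (1 - t⁻¹ * q ^ j) = (1 - t⁻¹) * ∏' j, (1 - q * t⁻¹ * q ^ j) := by
    rw [tprod_one_sub_mul_pow_eq t⁻¹ hq 1]
    simp only [qPochhammer, prod_range_one, pow_zero, pow_one, mul_one, mul_comm t⁻¹ q]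
  rw [hti_eq, show ∀ a b c : ℝ, a / ((1 - t⁻¹) * b) / (√t * c) = a / (√t * (1 - t⁻¹) * c * b) by
    intros; rw [div_div]; ring, hsqrt] at hcol
  simpa only [tsum_mul_left] using hcol

end IntPartition

/-- Bloch–Okounkov one-point function.  For real `q, t` with
`0 < q < 1` and `1 < t < 1/q`, all the series below converge absolutely and
`(∏_{n≥1}(1-q^n)) · Σ_{λ∈𝒫} q^{|λ|} Σ_{i=1}^∞ t^{λ_i - i + 1/2} = 1/θ(t)`, where
`θ(t) = (∏_{n≥1}(1-q^n))^{-2} (t^{1/2} - t^{-1/2}) ∏_{n≥1}(1-q^n t)(1-q^n t^{-1})`.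
Here `t^x` denotes the real power `Real.rpow`, and in the 0-indexed convention
`λ_i - i + 1/2` becomes `λ_i - i - 1/2`. -/
theorem stmt_11 (q t : ℝ) (hq0 : 0 < q) (hq1 : q < 1) (ht1 : 1 < t) (ht2 : t < 1 / q) :
    (∀ lam : IntPartition,
      Summable fun i : ℕ => t ^ ((lam.parts i : ℝ) - (i : ℝ) - 1 / 2)) ∧
    Summable (fun lam : IntPartition =>
      q ^ lam.wt * ∑' i : ℕ, t ^ ((lam.parts i : ℝ) - (i : ℝ) - 1 / 2)) ∧
    Multipliable (fun m : ℕ => 1 - q ^ (m + 1)) ∧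
    Multipliable (fun m : ℕ => (1 - q ^ (m + 1) * t) * (1 - q ^ (m + 1) * t⁻¹)) ∧
    (∏' m : ℕ, (1 - q ^ (m + 1))) *
        ∑' lam : IntPartition,
          q ^ lam.wt * ∑' i : ℕ, t ^ ((lam.parts i : ℝ) - (i : ℝ) - 1 / 2) =
      1 / (((∏' m : ℕ, (1 - q ^ (m + 1))) ^ 2)⁻¹ *
        (t ^ ((1 : ℝ) / 2) - t ^ (-(1 : ℝ) / 2)) *
        ∏' m : ℕ, ((1 - q ^ (m + 1) * t) * (1 - q ^ (m + 1) * t⁻¹))) := by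
  have hq : ‖q‖ < 1 := by rwa [Real.norm_of_nonneg hq0.le]
  have hqt : q * t < 1 := by rwa [lt_div_iff₀ hq0, mul_comm] at ht2
  obtain ⟨hrow, hsum⟩ := IntPartition.hasSum_pow_wt_mul_tsum_rpow hq0 hq1 ht1 hqt
  have hB := multipliable_one_sub_mul_pow (q * t) hq
  have hC := multipliable_one_sub_mul_pow (q * t⁻¹) hq
  have hBC (m : ℕ) : (1 - q * t * q ^ m) * (1 - q * t⁻¹ * q ^ m) =
      (1 - q ^ (m + 1) * t) * (1 - q ^ (m + 1) * t⁻¹) := by ring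
  refine ⟨hrow, hsum.summable, by simpa only [← pow_succ'] using multipliable_one_sub_mul_pow q hq,
    (hB.mul hC).congr hBC, ?_⟩
  have hA : ∏' m : ℕ, (1 - q ^ (m + 1)) = ∏' j, (1 - q * q ^ j) :=
    tprod_congr fun m => by rw [pow_succ']
  rw [← tprod_congr hBC, hB.tprod_mul hC, hA, hsum.tsum_eq, ← Real.sqrt_eq_rpow, neg_div,
    Real.rpow_neg (one_pos.trans ht1).le, ← Real.sqrt_eq_rpow]
  have hA0 := tprod_one_sub_mul_pow_ne_zero hq (mul_pow_ne_one hq hq.le)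
  field_simp
end
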